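/- arXiv:2111.06354 — 2 statements merged into one kernel-verified Lean document; each statement's English description precedes it below -/
import Mathlib

section
/- Let h = x − δ with δ in the algebraic closure of ℚ_p, m ∈ ℤ_p, t > 0, T = ⌈t⌉. Then at most one i ∈ {0, 1, …, p−1} satisfies v_p(m + i·p^{T−1} − δ) ≥ t. Consequently, defining χ̂_t(m) = ∫_{⌈t⌉−1}^{⌈t⌉} χ_u(m) du where χ_u(m) = 1 if v_p(m − δ) ≥ u and 0 otherwise, one has χ̂_{t−1}(m) ≥ Σ_{i=0}^{p−1} χ̂_t(m + i·p^{t−1}) for integer t ≥ 1. -/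
/-!
Mathlib's norm on `PadicAlgCl p = AlgebraicClosure ℚ_[p]` is the spectral norm, and
`‖x‖ = ‖a₀‖ ^ (1 / d)` for the minimal polynomial `X ^ d + ⋯ + a₀` of `x`; hence
`‖x‖ = p ^ (-vp p x)` for `x ≠ 0`, and `vp` inherits the ultrametric inequality.
If `vp (m + i p ^ k - δ) > k` and `j ≠ i` is another digit, then `(j - i) p ^ k` has valuation
exactly `k`, so `vp (m + j p ^ k - δ) = k`. Thus at most one digit `i` has
`vp (m + i p ^ k - δ) > k`, and if one does then `vp (m - δ) ≥ k`. Since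
`χ̂_r(a) = clamp₀₁ (vp (a - δ) - (⌈r⌉ - 1))`, the sum of the `χ̂_{k+1}` over the digits has at
most one nonzero term, bounded by `1 = χ̂_k(m)`.
-/

open Polynomial

/-- The `p`-adic valuation on the algebraic closure of `ℚ_p`, normalized so that
`v_p(p) = 1`.  For `x ≠ 0` with minimal polynomial of degree `d` over `ℚ_p`, it is
given by `v_p(c₀)/d` where `c₀` is the constant coefficient of the minimal
polynomial (junk value `0` at `x = 0`). -/
noncomputable def vp (p : ℕ) [Fact p.Prime] (x : AlgebraicClosure ℚ_[p]) : ℝ :=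
  (((minpoly ℚ_[p] x).coeff 0).valuation : ℝ) / ((minpoly ℚ_[p] x).natDegree : ℝ)

noncomputable def pad (p : ℕ) [Fact p.Prime] (m : ℤ_[p]) : AlgebraicClosure ℚ_[p] :=
  algebraMap ℚ_[p] (AlgebraicClosure ℚ_[p]) (m : ℚ_[p])

/-- The averaged indicator `χ̂_r(m) = ∫_{⌈r⌉−1}^{⌈r⌉} χ_u(m) du`, where
`χ_u(m) = 1` if `v_p(m − δ) ≥ u` and `0` otherwise. -/
noncomputable def chihat (p : ℕ) [Fact p.Prime] (δ : AlgebraicClosure ℚ_[p])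
    (m : ℤ_[p]) (r : ℝ) : ℝ :=
  ∫ u in ((⌈r⌉ : ℝ) - 1)..(⌈r⌉ : ℝ), if u ≤ vp p (pad p m - δ) then (1 : ℝ) else 0

variable {p : ℕ} [Fact p.Prime]

namespace PadicAlgCl

theorem norm_eq_rpow_neg_vp {x : PadicAlgCl p} (hx : x ≠ 0) : ‖x‖ = (p : ℝ) ^ (-vp p x) := by
  have hint : IsIntegral ℚ_[p] x := Algebra.IsIntegral.isIntegral x
  have hd : ((minpoly ℚ_[p] x).natDegree : ℝ) ≠ 0 :=
    Nat.cast_ne_zero.mpr (minpoly.natDegree_pos hint).ne'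
  rw [← spectralNorm_eq, spectralNorm.spectralNorm_eq_norm_coeff_zero_rpow,
    Padic.norm_eq_zpow_neg_valuation (minpoly.coeff_zero_ne_zero hint hx), ← Real.rpow_intCast,
    ← Real.rpow_mul (Nat.cast_nonneg p), vp]
  congr 1
  push_cast
  field_simp

theorem vp_eq_of_norm_eq {x : PadicAlgCl p} {s : ℝ} (hx : x ≠ 0) (h : ‖x‖ = (p : ℝ) ^ (-s)) :
    vp p x = s := by
  have hp : (1 : ℝ) < p := by exact_mod_cast (Fact.out : p.Prime).one_lt
  rw [norm_eq_rpow_neg_vp hx, Real.rpow_right_inj (by positivity) hp.ne'] at h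
  linarith

theorem norm_lt_of_lt_vp {x : PadicAlgCl p} {s : ℝ} (h : s < vp p x) : ‖x‖ < (p : ℝ) ^ (-s) := by
  have hp : (1 : ℝ) < p := by exact_mod_cast (Fact.out : p.Prime).one_lt
  rcases eq_or_ne x 0 with rfl | hx
  · rw [norm_zero]
    positivity
  · rw [norm_eq_rpow_neg_vp hx, Real.rpow_lt_rpow_left_iff hp]
    linarith

theorem vp_add_eq_of_norm_eq {x y : PadicAlgCl p} {s : ℝ} (hy : ‖y‖ = (p : ℝ) ^ (-s))
    (hx : s < vp p x) : vp p (x + y) = s := by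
  have hlt : ‖x‖ < ‖y‖ := hy ▸ norm_lt_of_lt_vp hx
  have hxy : ‖x + y‖ = ‖y‖ := by
    rw [IsUltrametricDist.norm_add_eq_max_of_norm_ne_norm hlt.ne, max_eq_right hlt.le]
  refine vp_eq_of_norm_eq (norm_pos_iff.mp ?_) (hxy.trans hy)
  exact hxy ▸ (norm_nonneg x).trans_lt hlt

end PadicAlgCl

theorem PadicInt.norm_intCast_mul_p_pow {n : ℤ} (hn : ¬ (p : ℤ) ∣ n) (k : ℕ) :
    ‖(n : ℤ_[p]) * (p : ℤ_[p]) ^ k‖ = (p : ℝ) ^ (-(k : ℝ)) := by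
  have hunit : ‖(n : ℤ_[p])‖ = 1 :=
    le_antisymm (PadicInt.norm_le_one _) (not_lt.mp (mt (PadicInt.norm_int_lt_one_iff_dvd n).mp hn))
  rw [norm_mul, hunit, one_mul, PadicInt.norm_p_pow, ← Real.rpow_intCast]
  push_cast
  rfl

theorem Int.not_natCast_dvd_sub_of_lt {n i j : ℕ} (hi : i < n) (hj : j < n) (hij : i ≠ j) :
    ¬ (n : ℤ) ∣ (j - i : ℤ) := by
  intro h
  have := Int.eq_zero_of_abs_lt_dvd h (by rw [abs_lt]; omega)
  omega

theorem norm_pad (a : ℤ_[p]) : ‖pad p a‖ = ‖a‖ := by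
  rw [pad, PadicAlgCl.norm_extends, PadicInt.padic_norm_e_of_padicInt]

theorem pad_add (a b : ℤ_[p]) : pad p (a + b) = pad p a + pad p b := by
  simp [pad]

section Digits

variable {δ : AlgebraicClosure ℚ_[p]} {m : ℤ_[p]} {k i j : ℕ}

theorem vp_pad_add_digit_eq (hi : i < p) (hj : j < p) (hij : i ≠ j)
    (h : (k : ℝ) < vp p (pad p (m + (i : ℤ_[p]) * (p : ℤ_[p]) ^ k) - δ)) :
    vp p (pad p (m + (j : ℤ_[p]) * (p : ℤ_[p]) ^ k) - δ) = k := by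
  have hsplit : pad p (m + (j : ℤ_[p]) * (p : ℤ_[p]) ^ k) - δ =
      (pad p (m + (i : ℤ_[p]) * (p : ℤ_[p]) ^ k) - δ) +
        pad p (((j - i : ℤ) : ℤ_[p]) * (p : ℤ_[p]) ^ k) := by
    rw [sub_add_eq_add_sub, ← pad_add]
    congr 2
    push_cast
    ring
  rw [hsplit]
  refine PadicAlgCl.vp_add_eq_of_norm_eq ?_ h
  rw [norm_pad, PadicInt.norm_intCast_mul_p_pow (Int.not_natCast_dvd_sub_of_lt hi hj hij)]

theorem eq_of_lt_vp_pad_add_digit (hi : i < p) (hj : j < p)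
    (hvi : (k : ℝ) < vp p (pad p (m + (i : ℤ_[p]) * (p : ℤ_[p]) ^ k) - δ))
    (hvj : (k : ℝ) < vp p (pad p (m + (j : ℤ_[p]) * (p : ℤ_[p]) ^ k) - δ)) : i = j := by
  by_contra hij
  linarith [vp_pad_add_digit_eq hi hj hij hvi]

theorem le_vp_pad_of_lt_vp_pad_add_digit (hi : i < p)
    (hvi : (k : ℝ) < vp p (pad p (m + (i : ℤ_[p]) * (p : ℤ_[p]) ^ k) - δ)) :
    (k : ℝ) ≤ vp p (pad p m - δ) := by
  rcases eq_or_ne i 0 with rfl | hi0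
  · simpa using hvi.le
  · simpa using (vp_pad_add_digit_eq hi (Fact.out : p.Prime).pos hi0 hvi).ge

end Digits

section Chihat

variable (δ : AlgebraicClosure ℚ_[p]) (m : ℤ_[p]) (r : ℝ)

theorem chihat_eq :
    chihat p δ m r = max (min (⌈r⌉ : ℝ) (vp p (pad p m - δ)) - ((⌈r⌉ : ℝ) - 1)) 0 := by
  have hind : (fun u => if u ≤ vp p (pad p m - δ) then (1 : ℝ) else 0) =
      (Set.Iic (vp p (pad p m - δ))).indicator 1 := by
    ext u
    simp [Set.indicator_apply]
  rw [chihat, intervalIntegral.integral_of_le (by linarith), hind,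
    MeasureTheory.integral_indicator_one measurableSet_Iic,
    MeasureTheory.measureReal_restrict_apply measurableSet_Iic, Set.inter_comm,
    Set.Ioc_inter_Iic, Real.volume_real_Ioc]

theorem chihat_nonneg : 0 ≤ chihat p δ m r := by
  rw [chihat_eq]
  exact le_max_right _ _

theorem chihat_le_one : chihat p δ m r ≤ 1 := by
  rw [chihat_eq]
  exact max_le (by linarith [min_le_left (⌈r⌉ : ℝ) (vp p (pad p m - δ))]) zero_le_one

variable {δ m r}

theorem chihat_eq_zero_of_vp_le (h : vp p (pad p m - δ) ≤ ⌈r⌉ - 1) : chihat p δ m r = 0 := by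
  rw [chihat_eq]
  exact max_eq_right (by linarith [min_le_right (⌈r⌉ : ℝ) (vp p (pad p m - δ))])

theorem chihat_eq_one_of_le_vp (h : ⌈r⌉ ≤ vp p (pad p m - δ)) : chihat p δ m r = 1 := by
  rw [chihat_eq, min_eq_left h]
  norm_num

theorem sum_chihat_pad_add_digit_le (k : ℕ) :
    ∑ i ∈ Finset.range p, chihat p δ (m + (i : ℤ_[p]) * (p : ℤ_[p]) ^ k) (k + 1) ≤
      chihat p δ m k := by
  have hceil : ((⌈(k : ℝ) + 1⌉ : ℤ) : ℝ) - 1 = k := by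
    rw [← Nat.cast_add_one, Int.ceil_natCast]
    push_cast
    ring
  by_cases hnear : ∃ i < p, (k : ℝ) < vp p (pad p (m + (i : ℤ_[p]) * (p : ℤ_[p]) ^ k) - δ)
  · obtain ⟨i, hi, hvi⟩ := hnear
    calc ∑ j ∈ Finset.range p, chihat p δ (m + (j : ℤ_[p]) * (p : ℤ_[p]) ^ k) (k + 1)
      _ = chihat p δ (m + (i : ℤ_[p]) * (p : ℤ_[p]) ^ k) (k + 1) :=
        Finset.sum_eq_single_of_mem i (Finset.mem_range.mpr hi) fun j hj hji =>
          chihat_eq_zero_of_vp_le (by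
            rw [hceil, vp_pad_add_digit_eq hi (Finset.mem_range.mp hj) hji.symm hvi])
      _ ≤ 1 := chihat_le_one _ _ _
      _ = chihat p δ m k := (chihat_eq_one_of_le_vp (by
        simpa using le_vp_pad_of_lt_vp_pad_add_digit hi hvi)).symm
  · push Not at hnear
    rw [Finset.sum_eq_zero fun i hi => chihat_eq_zero_of_vp_le
      (by rw [hceil]; exact hnear i (Finset.mem_range.mp hi))]
    exact chihat_nonneg _ _ _

end Chihat

/-- Let `h = x − δ` with `δ` in the algebraic closure of `ℚ_p`, `m ∈ ℤ_p`, `t > 0`,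
`T = ⌈t⌉`.  Then at most one `i ∈ {0, …, p−1}` satisfies
`v_p(m + i·p^{T−1} − δ) ≥ t`; consequently, for integer `t ≥ 1`,
`χ̂_{t−1}(m) ≥ Σ_{i=0}^{p−1} χ̂_t(m + i·p^{t−1})`. -/
theorem chihat_division (p : ℕ) [Fact p.Prime] (δ : AlgebraicClosure ℚ_[p]) (m : ℤ_[p]) :
    (∀ t : ℝ, 0 < t → ∀ i j : ℕ, i < p → j < p →
      t ≤ vp p (pad p (m + (i : ℤ_[p]) * (p : ℤ_[p]) ^ (⌈t⌉₊ - 1)) - δ) →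
      t ≤ vp p (pad p (m + (j : ℤ_[p]) * (p : ℤ_[p]) ^ (⌈t⌉₊ - 1)) - δ) → i = j) ∧
    (∀ t : ℕ, 1 ≤ t →
      ∑ i ∈ Finset.range p, chihat p δ (m + (i : ℤ_[p]) * (p : ℤ_[p]) ^ (t - 1)) (t : ℝ) ≤
        chihat p δ m ((t : ℝ) - 1)) := by
  refine ⟨fun t ht i j hi hj hvi hvj => ?_, fun t ht => ?_⟩
  · have hceil : ((⌈t⌉₊ - 1 : ℕ) : ℝ) < t := by
      rw [Nat.cast_sub (Nat.one_le_ceil_iff.mpr ht), Nat.cast_one]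
      linarith [Nat.ceil_lt_add_one ht.le]
    exact eq_of_lt_vp_pad_add_digit hi hj (hceil.trans_le hvi) (hceil.trans_le hvj)
  · obtain ⟨k, rfl⟩ := Nat.exists_eq_add_of_le' ht
    simpa using sum_chihat_pad_add_digit_le (δ := δ) (m := m) k
end

section
/- Define a resolution of a real ω ≥ 0 to be a sequence (γ_i)_{i≥0} with values in {0} ∪ [1, ∞) such that γ_i ≥ p·γ_{i+1} for all i and Σ γ_i = ω. Then the lexicographically minimal resolution is given by γ̃_i(ω) = p^{−i}·(p−1)/(p − p^{−k})·ω for 0 ≤ i ≤ k and γ̃_i = 0 for i > k, where k = ⌊log_p((p−1)ω + 1)⌋ − 1. -/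
/-!
Let `n = ⌊log_p((p - 1)ω + 1)⌋`. If `γ_m ≠ 0` then `γ_j ≥ p^(m-j)` for `j ≤ m`, so
`ω ≥ 1 + p + ⋯ + p^m`, i.e. `p^(m+1) ≤ (p - 1)ω + 1`, and hence `m < n`: every resolution vanishes
from index `n` on (for `n = 0` this forces `ω = 0`). For `n ≥ 1`, `minRes` is the geometric
progression of ratio `1/p` with exactly `n` nonzero terms, scaled to sum to `ω`; the choice of `n` is
exactly what makes its last term at least `1`. If a resolution `γ` agrees with `minRes` below
`i < n`, the two have the same sum over `[i, n)`. For `minRes` that sum is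
`minRes_i · (1 + p⁻¹ + ⋯ + p^-(n-1-i))`, and for `γ` it is at most `γ_i` times the same factor, since
`γ_(i+j) ≤ p^-j γ_i`. Hence `minRes_i ≤ γ_i` at the first index where they differ.
-/

/-- A resolution of a real `ω ≥ 0`: a sequence `(γ_i)` with values in `{0} ∪ [1, ∞)`
such that `γ_i ≥ p·γ_{i+1}` for all `i` and `Σ γ_i = ω`. -/
def IsResolution (p : ℕ) (ω : ℝ) (γ : ℕ → ℝ) : Prop :=
  (∀ i, γ i = 0 ∨ 1 ≤ γ i) ∧ (∀ i, (p : ℝ) * γ (i + 1) ≤ γ i) ∧ HasSum γ ω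

/-- Lexicographic comparison of sequences: `γ ≤ γ'` iff they are equal or `γ` is
strictly smaller at the first index where they differ. -/
def LexLE (γ γ' : ℕ → ℝ) : Prop :=
  γ = γ' ∨ ∃ i, (∀ j < i, γ j = γ' j) ∧ γ i < γ' i

/-- The candidate minimal resolution:
`γ̃_i(ω) = p^{−i}·(p−1)/(p − p^{−k})·ω` for `0 ≤ i ≤ k` and `0` for `i > k`, where
`k = ⌊log_p((p−1)ω + 1)⌋ − 1`. -/
noncomputable def minRes (p : ℕ) (ω : ℝ) : ℕ → ℝ := fun i =>
  if (i : ℤ) ≤ ⌊Real.logb p ((p - 1) * ω + 1)⌋ - 1 then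
    (p : ℝ) ^ (-(i : ℤ)) * ((p : ℝ) - 1) /
      ((p : ℝ) - (p : ℝ) ^ (-(⌊Real.logb p ((p - 1) * ω + 1)⌋ - 1))) * ω
  else 0

open Finset Real

lemma natCast_le_floor_logb_iff {b : ℕ} (hb : 1 < b) {x : ℝ} (hx : 0 < x) (m : ℕ) :
    (m : ℤ) ≤ ⌊logb b x⌋ ↔ (b : ℝ) ^ m ≤ x := by
  rw [floor_logb_natCast hx.le, ← Int.zpow_le_iff_le_log hb hx, zpow_natCast]

lemma sub_one_mul_sum_range_inv_pow {K : Type*} [Field K] {x : K} (hx : x ≠ 0) (k : ℕ) :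
    (x - 1) * ∑ j ∈ range (k + 1), x⁻¹ ^ j = x - x⁻¹ ^ k := by
  linear_combination (-x) * geom_sum_mul x⁻¹ (k + 1) +
    (∑ j ∈ range (k + 1), x⁻¹ ^ j - x⁻¹ ^ k) * mul_inv_cancel₀ hx

lemma lexLE_of_le_of_eq_below {γ γ' : ℕ → ℝ} (h : ∀ i, (∀ j < i, γ j = γ' j) → γ i ≤ γ' i) :
    LexLE γ γ' := by
  classical
  by_cases heq : γ = γ'
  · exact Or.inl heq
  have hne : ∃ i, γ i ≠ γ' i := Function.ne_iff.1 heq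
  have hbelow : ∀ j < Nat.find hne, γ j = γ' j := fun j hj => not_not.1 (Nat.find_min hne hj)
  exact Or.inr ⟨_, hbelow, (h _ hbelow).lt_of_ne (Nat.find_spec hne)⟩

namespace IsResolution

variable {p : ℕ} {ω : ℝ} {γ : ℕ → ℝ}

lemma nonneg (h : IsResolution p ω γ) (i : ℕ) : 0 ≤ γ i :=
  (h.1 i).elim (fun h0 => h0.ge) (fun h1 => zero_le_one.trans h1)

lemma pow_mul_le (h : IsResolution p ω γ) (i j : ℕ) : (p : ℝ) ^ j * γ (i + j) ≤ γ i := by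
  induction j with
  | zero => simp
  | succ j ih =>
    calc (p : ℝ) ^ (j + 1) * γ (i + (j + 1)) = (p : ℝ) ^ j * (p * γ (i + j + 1)) := by
          rw [pow_succ, ← add_assoc]; ring
      _ ≤ (p : ℝ) ^ j * γ (i + j) := by gcongr; exact h.2.1 _
      _ ≤ γ i := ih

lemma sum_le (h : IsResolution p ω γ) (s : Finset ℕ) : ∑ j ∈ s, γ j ≤ ω :=
  sum_le_hasSum s (fun j _ => h.nonneg j) h.2.2

lemma pow_succ_le_of_ne_zero (h : IsResolution p ω γ) (hp : 1 ≤ p) {m : ℕ} (hm : γ m ≠ 0) :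
    (p : ℝ) ^ (m + 1) ≤ (p - 1) * ω + 1 := by
  have hγm : 1 ≤ γ m := (h.1 m).resolve_left hm
  have hgeom : ∑ j ∈ range (m + 1), (p : ℝ) ^ j ≤ ω :=
    calc ∑ j ∈ range (m + 1), (p : ℝ) ^ j = ∑ j ∈ range (m + 1), (p : ℝ) ^ (m - j) := by
          rw [← sum_range_reflect]; simp
      _ ≤ ∑ j ∈ range (m + 1), γ j := by
          refine sum_le_sum fun j hj => ?_
          have := h.pow_mul_le j (m - j)
          rw [Nat.add_sub_cancel' (Nat.lt_succ_iff.1 (mem_range.1 hj))] at this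
          nlinarith [pow_pos (show (0 : ℝ) < p by exact_mod_cast hp) (m - j)]
      _ ≤ ω := h.sum_le _
  have hp1 : (0 : ℝ) ≤ p - 1 := sub_nonneg.2 (by exact_mod_cast hp)
  nlinarith [geom_sum_mul (p : ℝ) (m + 1)]

lemma eq_zero_of_floor_logb_le (h : IsResolution p ω γ) (hp : 1 < p) {m : ℕ}
    (hm : ⌊logb p ((p - 1) * ω + 1)⌋ ≤ m) : γ m = 0 := by
  by_contra hne
  have hpow := h.pow_succ_le_of_ne_zero hp.le hne
  have hpos : 0 < (p - 1) * ω + 1 := (pow_pos (by exact_mod_cast hp.pos) _).trans_le hpow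
  have := (natCast_le_floor_logb_iff hp hpos (m + 1)).2 hpow
  omega

lemma sum_Ico_le (h : IsResolution p ω γ) (hp : 0 < p) (i n : ℕ) :
    ∑ j ∈ Ico i n, γ j ≤ γ i * ∑ j ∈ range (n - i), (p : ℝ)⁻¹ ^ j := by
  rw [sum_Ico_eq_sum_range, mul_sum]
  refine sum_le_sum fun j _ => ?_
  rw [inv_pow, ← div_eq_mul_inv, le_div_iff₀ (pow_pos (by exact_mod_cast hp) j), mul_comm]
  exact h.pow_mul_le i j

end IsResolution

section minRes

variable {p : ℕ} {ω : ℝ} {k : ℕ}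

lemma minRes_of_le (hk : ⌊logb p ((p - 1) * ω + 1)⌋ = k + 1) {i : ℕ} (hi : i ≤ k) :
    minRes p ω i = (p : ℝ)⁻¹ ^ i * ((p - 1) * ω / (p - (p : ℝ)⁻¹ ^ k)) := by
  rw [minRes, hk, if_pos (by omega), add_sub_cancel_right, zpow_neg, zpow_neg, zpow_natCast,
    zpow_natCast, inv_pow, inv_pow]
  ring

lemma minRes_of_lt (hk : ⌊logb p ((p - 1) * ω + 1)⌋ = k + 1) {i : ℕ} (hi : k < i) :
    minRes p ω i = 0 := by
  rw [minRes, hk, if_neg (by omega)]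

lemma one_le_minRes (hp : 1 < p) (hω : 0 ≤ ω) (hk : ⌊logb p ((p - 1) * ω + 1)⌋ = k + 1)
    {i : ℕ} (hi : i ≤ k) : 1 ≤ minRes p ω i := by
  have hp1 : (1 : ℝ) < p := by exact_mod_cast hp
  have hpow : (p : ℝ) ^ (k + 1) ≤ (p - 1) * ω + 1 :=
    (natCast_le_floor_logb_iff hp (by nlinarith) (k + 1)).1 (by rw [hk]; push_cast; rfl)
  have hq : (1 : ℝ) ≤ p ^ k := one_le_pow₀ hp1.le
  rw [minRes_of_le hk hi]
  have hdenom : 0 < (p : ℝ) - (p : ℝ)⁻¹ ^ k := by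
    rw [inv_pow]; linarith [inv_le_one_of_one_le₀ hq]
  calc (1 : ℝ) ≤ (p : ℝ)⁻¹ ^ k * ((p - 1) * ω / (p - (p : ℝ)⁻¹ ^ k)) := by
        have hcancel : (p : ℝ)⁻¹ ^ k * p ^ (k + 1) = p := by
          rw [pow_succ, ← mul_assoc, ← mul_pow, inv_mul_cancel₀ (by positivity), one_pow, one_mul]
        rw [mul_div_assoc', le_div_iff₀ hdenom, one_mul]
        nlinarith [mul_le_mul_of_nonneg_left hpow (by positivity : (0 : ℝ) ≤ (p : ℝ)⁻¹ ^ k)]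
    _ ≤ (p : ℝ)⁻¹ ^ i * ((p - 1) * ω / (p - (p : ℝ)⁻¹ ^ k)) := by
        refine mul_le_mul_of_nonneg_right (pow_le_pow_of_le_one (by positivity)
          (inv_le_one_of_one_le₀ hp1.le) hi) (div_nonneg (by nlinarith) hdenom.le)

lemma minRes_nonneg (hp : 1 < p) (hω : 0 ≤ ω) (hk : ⌊logb p ((p - 1) * ω + 1)⌋ = k + 1)
    (i : ℕ) : 0 ≤ minRes p ω i := by
  rcases le_or_gt i k with hi | hi
  · exact zero_le_one.trans (one_le_minRes hp hω hk hi)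
  · exact (minRes_of_lt hk hi).ge

lemma mul_minRes_succ_le (hp : 1 < p) (hω : 0 ≤ ω) (hk : ⌊logb p ((p - 1) * ω + 1)⌋ = k + 1)
    (i : ℕ) : (p : ℝ) * minRes p ω (i + 1) ≤ minRes p ω i := by
  rcases le_or_gt (i + 1) k with hi | hi
  · rw [minRes_of_le hk hi, minRes_of_le hk (by omega), pow_succ]
    refine le_of_eq ?_
    field_simp
  · rw [minRes_of_lt hk hi, mul_zero]
    exact minRes_nonneg hp hω hk i

lemma sum_Ico_minRes (hk : ⌊logb p ((p - 1) * ω + 1)⌋ = k + 1) (i : ℕ) :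
    ∑ j ∈ Ico i (k + 1), minRes p ω j = minRes p ω i * ∑ j ∈ range (k + 1 - i), (p : ℝ)⁻¹ ^ j := by
  rw [sum_Ico_eq_sum_range, mul_sum]
  refine sum_congr rfl fun j hj => ?_
  have hij : i + j ≤ k := by have := mem_range.1 hj; omega
  rw [minRes_of_le hk hij, minRes_of_le hk (by omega), pow_add]
  ring

lemma sum_range_minRes (hp : 1 < p) (hk : ⌊logb p ((p - 1) * ω + 1)⌋ = k + 1) :
    ∑ j ∈ range (k + 1), minRes p ω j = ω := by
  rw [range_eq_Ico, sum_Ico_minRes hk 0, minRes_of_le hk k.zero_le, Nat.sub_zero]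
  have hp1 : (1 : ℝ) < p := by exact_mod_cast hp
  have hdenom : (p : ℝ) - (p : ℝ)⁻¹ ^ k ≠ 0 := by
    rw [inv_pow]
    linarith [inv_le_one_of_one_le₀ (one_le_pow₀ (n := k) hp1.le)]
  rw [pow_zero, one_mul, div_mul_eq_mul_div, mul_right_comm,
    sub_one_mul_sum_range_inv_pow (by positivity), mul_div_cancel_left₀ _ hdenom]

lemma isResolution_minRes (hp : 1 < p) (hω : 0 ≤ ω)
    (hk : ⌊logb p ((p - 1) * ω + 1)⌋ = k + 1) : IsResolution p ω (minRes p ω) := by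
  refine ⟨fun i => ?_, mul_minRes_succ_le hp hω hk, ?_⟩
  · rcases le_or_gt i k with hi | hi
    · exact Or.inr (one_le_minRes hp hω hk hi)
    · exact Or.inl (minRes_of_lt hk hi)
  · have hsum : HasSum (minRes p ω) (∑ j ∈ range (k + 1), minRes p ω j) :=
      hasSum_sum_of_ne_finset_zero fun j hj => minRes_of_lt hk (by simpa using hj)
    rwa [sum_range_minRes hp hk] at hsum

lemma minRes_le_of_eq_below (hp : 1 < p) (hk : ⌊logb p ((p - 1) * ω + 1)⌋ = k + 1)
    {γ : ℕ → ℝ} (hγ : IsResolution p ω γ) {i : ℕ} (hi : ∀ j < i, minRes p ω j = γ j) :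
    minRes p ω i ≤ γ i := by
  rcases lt_or_ge k i with hki | hik
  · rw [minRes_of_lt hk hki]
    exact hγ.nonneg i
  have hsumγ : ∑ j ∈ range (k + 1), γ j = ω :=
    (hasSum_sum_of_ne_finset_zero fun j hj => hγ.eq_zero_of_floor_logb_le hp
      (by rw [hk]; have := mem_range.not.1 hj; omega)).unique hγ.2.2
  have htail : ∑ j ∈ Ico i (k + 1), minRes p ω j = ∑ j ∈ Ico i (k + 1), γ j := by
    rw [sum_Ico_eq_sub _ (by omega), sum_Ico_eq_sub _ (by omega), sum_range_minRes hp hk,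
      hsumγ, sum_congr rfl fun j hj => hi j (mem_range.1 hj)]
  have hgeom : 0 < ∑ j ∈ range (k + 1 - i), (p : ℝ)⁻¹ ^ j :=
    sum_pos (fun j _ => pow_pos (inv_pos.2 (by exact_mod_cast hp.pos)) j)
      (nonempty_range_iff.2 (by omega))
  refine le_of_mul_le_mul_right ?_ hgeom
  calc minRes p ω i * ∑ j ∈ range (k + 1 - i), (p : ℝ)⁻¹ ^ j
      = ∑ j ∈ Ico i (k + 1), γ j := by rw [← sum_Ico_minRes hk, htail]
    _ ≤ γ i * ∑ j ∈ range (k + 1 - i), (p : ℝ)⁻¹ ^ j := hγ.sum_Ico_le (by omega) i (k + 1)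

end minRes

/-- The lexicographically minimal resolution of `ω` is given by the explicit formula
`minRes`: it is a resolution, and it is lexicographically `≤` every resolution of `ω`. -/
theorem minRes_isLexMinimalResolution (p : ℕ) (hp : p.Prime) (ω : ℝ) (hω : 0 ≤ ω)
    (hex : ∃ γ, IsResolution p ω γ) :
    IsResolution p ω (minRes p ω) ∧ ∀ γ, IsResolution p ω γ → LexLE (minRes p ω) γ := by
  have hp1 : 1 < p := hp.one_lt
  obtain ⟨n, hn⟩ : ∃ n : ℕ, ⌊logb p ((p - 1) * ω + 1)⌋ = n :=
    Int.eq_ofNat_of_zero_le (Int.floor_nonneg.2 (logb_nonneg (by exact_mod_cast hp1)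
      (by nlinarith [(Nat.one_lt_cast (α := ℝ)).2 hp1])))
  cases n with
  | zero =>
    have hmin : minRes p ω = 0 := funext fun i => by simp [minRes, hn]
    have hzero : ∀ γ, IsResolution p ω γ → γ = 0 := fun γ hγ =>
      funext fun m => hγ.eq_zero_of_floor_logb_le hp1 (by simp [hn])
    obtain ⟨γ₀, hγ₀⟩ := hex
    exact ⟨hmin ▸ hzero γ₀ hγ₀ ▸ hγ₀, fun γ hγ => Or.inl (hmin.trans (hzero γ hγ).symm)⟩
  | succ k =>
    push_cast at hn
    exact ⟨isResolution_minRes hp1 hω hn, fun γ hγ => lexLE_of_le_of_eq_below fun i hi =>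
      minRes_le_of_eq_below hp1 hn hγ hi⟩
end
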